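/- arXiv:1401.2890 — 5 statements merged into one kernel-verified Lean document; each statement's English description precedes it below -/
import Mathlib

section
/- Let a0 ≥ 1 and b0 > 0, and let g : ℝ² → ℝ satisfy the (a0,b0)-foliation conditions. Then for every measurable function f : ℝ² → [0,∞], (1/a0) ∫_{ℝ²} f(x,y) dx dy ≤ ∫_{ℝ²} f(g(x,y), y) dx dy ≤ a0 ∫_{ℝ²} f(x,y) dx dy. -/
/-!
On each horizontal line the map `x ↦ g (x, y)` is increasing with slopes between `a0⁻¹` and `a0`,
hence an `a0`-bi-Lipschitz bijection of `ℝ`. Since Lebesgue measure on `ℝ` is the one-dimensional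
Hausdorff measure, such a map distorts lengths by a factor at most `a0` in either direction, which
gives the two inequalities on every line; Tonelli's theorem integrates them over `y`.
-/

open MeasureTheory Filter Function
open scoped NNReal ENNReal

section BiLipschitz

variable {K : ℝ≥0} {h : ℝ → ℝ}

theorem AntilipschitzWith.map_volume_le (hh : AntilipschitzWith K h) (hm : Measurable h) :
    volume.map h ≤ (K : ℝ≥0∞) • volume := by
  refine Measure.le_iff.2 fun s hs => ?_
  rw [Measure.map_apply hm hs, Measure.smul_apply, smul_eq_mul]
  simpa [hausdorffMeasure_real] using hh.hausdorffMeasure_preimage_le zero_le_one s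

theorem LipschitzWith.volume_le_map (hh : LipschitzWith K h) (hs : Surjective h) :
    volume ≤ (K : ℝ≥0∞) • volume.map h := by
  refine Measure.le_iff.2 fun s hs' => ?_
  rw [Measure.smul_apply, smul_eq_mul, Measure.map_apply hh.continuous.measurable hs']
  calc volume s = volume (h '' (h ⁻¹' s)) := by rw [Set.image_preimage_eq s hs]
    _ ≤ K * volume (h ⁻¹' s) := by
      simpa [hausdorffMeasure_real] using hh.hausdorffMeasure_image_le zero_le_one (h ⁻¹' s)

theorem AntilipschitzWith.lintegral_comp_le (hh : AntilipschitzWith K h) (hm : Measurable h)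
    {f : ℝ → ℝ≥0∞} (hf : Measurable f) : ∫⁻ x, f (h x) ≤ K * ∫⁻ x, f x := by
  rw [← lintegral_map hf hm, ← smul_eq_mul, ← lintegral_smul_measure]
  exact lintegral_mono' (hh.map_volume_le hm) le_rfl

theorem LipschitzWith.lintegral_le_comp (hh : LipschitzWith K h) (hs : Surjective h)
    {f : ℝ → ℝ≥0∞} (hf : Measurable f) : ∫⁻ x, f x ≤ K * ∫⁻ x, f (h x) := by
  rw [← lintegral_map hf hh.continuous.measurable, ← smul_eq_mul, ← lintegral_smul_measure]
  exact lintegral_mono' (hh.volume_le_map hs) le_rfl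

end BiLipschitz

section SlopeBounds

variable {a : ℝ} {h : ℝ → ℝ}
  (hh : ∀ x x', x < x' → (x' - x) / a ≤ h x' - h x ∧ h x' - h x ≤ a * (x' - x))
include hh

theorem abs_sub_bounds_of_slope_bounds (ha : 0 < a) (x x' : ℝ) :
    |x' - x| / a ≤ |h x' - h x| ∧ |h x' - h x| ≤ a * |x' - x| := by
  wlog hxx : x ≤ x' generalizing x x'
  · rw [abs_sub_comm x', abs_sub_comm (h x')]
    exact this x' x (le_of_not_ge hxx)
  rcases hxx.eq_or_lt with rfl | hlt
  · simp
  obtain ⟨hlo, hhi⟩ := hh x x' hlt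
  have : 0 ≤ (x' - x) / a := div_nonneg (sub_nonneg.2 hxx) ha.le
  rw [abs_of_nonneg (sub_nonneg.2 hxx), abs_of_nonneg (by linarith)]
  exact ⟨hlo, hhi⟩

theorem lipschitzWith_of_slope_bounds (ha : 0 < a) : LipschitzWith a.toNNReal h := by
  refine LipschitzWith.of_dist_le_mul fun x' x => ?_
  rw [Real.coe_toNNReal a ha.le, Real.dist_eq, Real.dist_eq]
  exact (abs_sub_bounds_of_slope_bounds hh ha x x').2

theorem antilipschitzWith_of_slope_bounds (ha : 0 < a) : AntilipschitzWith a.toNNReal h := by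
  refine AntilipschitzWith.of_le_mul_dist fun x' x => ?_
  rw [Real.coe_toNNReal a ha.le, Real.dist_eq, Real.dist_eq, ← div_le_iff₀' ha]
  exact (abs_sub_bounds_of_slope_bounds hh ha x x').1

theorem surjective_of_slope_bounds (ha : 0 < a) : Surjective h := by
  refine (lipschitzWith_of_slope_bounds hh ha).continuous.surjective
    (tendsto_atTop_mono' atTop ?_ (tendsto_atTop_add_const_left _ (h 0)
      (tendsto_id.atTop_div_const ha)))
    (tendsto_atBot_mono' atBot ?_ (tendsto_atBot_add_const_left _ (h 0)
      (tendsto_id.atBot_div_const ha)))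
  · filter_upwards [eventually_gt_atTop 0] with x hx
    have := (hh 0 x hx).1
    simp only [sub_zero, id] at this ⊢
    linarith
  · filter_upwards [eventually_lt_atBot 0] with x hx
    have := (hh x 0 hx).1
    simp only [zero_sub, neg_div, id] at this ⊢
    linarith

end SlopeBounds

theorem lintegral_prod_le_const_mul_of_ae_slices {α β : Type*} [MeasurableSpace α]
    [MeasurableSpace β] {μ : Measure α} {ν : Measure β} [SFinite μ] [SFinite ν]
    {F G : α × β → ℝ≥0∞} (hF : Measurable F) (hG : Measurable G) {c : ℝ≥0∞} (hc : c ≠ ∞)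
    (h : ∀ᵐ y ∂ν, ∫⁻ x, F (x, y) ∂μ ≤ c * ∫⁻ x, G (x, y) ∂μ) :
    ∫⁻ q, F q ∂(μ.prod ν) ≤ c * ∫⁻ q, G q ∂(μ.prod ν) := by
  rw [lintegral_prod_symm' _ hF, lintegral_prod_symm' _ hG, ← lintegral_const_mul' _ _ hc]
  exact lintegral_mono_ae h

theorem stmt4_general (a0 b0 : ℝ) (ha0 : 1 ≤ a0) (g : ℝ × ℝ → ℝ)
    (hg1 : ∀ x x' y : ℝ, x < x' →
      (x' - x) / a0 ≤ g (x', y) - g (x, y) ∧ g (x', y) - g (x, y) ≤ a0 * (x' - x))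
    (hg2 : ∀ x y y' : ℝ, |g (x, y) - g (x, y')| ≤ b0 * |y - y'|) :
    ∀ f : ℝ × ℝ → ENNReal, Measurable f →
      ENNReal.ofReal (1 / a0) * (∫⁻ q : ℝ × ℝ, f q) ≤
        (∫⁻ q : ℝ × ℝ, f (g q, q.2)) ∧
      (∫⁻ q : ℝ × ℝ, f (g q, q.2)) ≤ ENNReal.ofReal a0 * (∫⁻ q : ℝ × ℝ, f q) := by
  have ha : 0 < a0 := one_pos.trans_le ha0
  have hslope (y : ℝ) := fun x x' => hg1 x x' y
  have hg_lip (x : ℝ) : LipschitzWith b0.toNNReal fun y => g (x, y) :=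
    LipschitzWith.of_dist_le_mul fun y y' => (hg2 x y y').trans <|
      mul_le_mul_of_nonneg_right (Real.le_coe_toNNReal b0) (abs_nonneg _)
  have hg : Measurable g := by
    simpa using measurable_uncurry_of_continuous_of_measurable (u := curry g)
      (fun y => (lipschitzWith_of_slope_bounds (hslope y) ha).continuous)
      (fun x => (hg_lip x).continuous.measurable)
  intro f hf
  have hfg : Measurable fun q : ℝ × ℝ => f (g q, q.2) := hf.comp (hg.prodMk measurable_snd)
  have hf_slice (y : ℝ) : Measurable fun x => f (x, y) := hf.comp measurable_prodMk_right
  have hupper : ∫⁻ q, f (g q, q.2) ≤ ENNReal.ofReal a0 * ∫⁻ q, f q :=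
    lintegral_prod_le_const_mul_of_ae_slices hfg hf ENNReal.ofReal_ne_top <| ae_of_all _ fun y =>
      (antilipschitzWith_of_slope_bounds (hslope y) ha).lintegral_comp_le
        (lipschitzWith_of_slope_bounds (hslope y) ha).continuous.measurable (hf_slice y)
  have hlower : ∫⁻ q, f q ≤ ENNReal.ofReal a0 * ∫⁻ q, f (g q, q.2) :=
    lintegral_prod_le_const_mul_of_ae_slices hf hfg ENNReal.ofReal_ne_top <| ae_of_all _ fun y =>
      (lipschitzWith_of_slope_bounds (hslope y) ha).lintegral_le_comp
        (surjective_of_slope_bounds (hslope y) ha) (hf_slice y)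
  refine ⟨?_, hupper⟩
  calc ENNReal.ofReal (1 / a0) * ∫⁻ q, f q
      ≤ ENNReal.ofReal (1 / a0) * (ENNReal.ofReal a0 * ∫⁻ q, f (g q, q.2)) := by gcongr
    _ = ∫⁻ q, f (g q, q.2) := by
        rw [← mul_assoc, ← ENNReal.ofReal_mul (by positivity), one_div_mul_cancel ha.ne',
          ENNReal.ofReal_one, one_mul]

/-- Coarea-type formula (3.11): integration over the plane is comparable, with constants
depending only on `a0`, to integration along the foliation `(x,y) ↦ (g(x,y), y)`. -/
theorem stmt4 (a0 b0 : ℝ) (ha0 : 1 ≤ a0) (hb0 : 0 < b0) (g : ℝ × ℝ → ℝ)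
    (hg1 : ∀ x x' y : ℝ, x < x' →
      (x' - x) / a0 ≤ g (x', y) - g (x, y) ∧ g (x', y) - g (x, y) ≤ a0 * (x' - x))
    (hg2 : ∀ x y y' : ℝ, |g (x, y) - g (x, y')| ≤ b0 * |y - y'|) :
    ∀ f : ℝ × ℝ → ENNReal, Measurable f →
      ENNReal.ofReal (1 / a0) * (∫⁻ q : ℝ × ℝ, f q) ≤
        (∫⁻ q : ℝ × ℝ, f (g q, q.2)) ∧
      (∫⁻ q : ℝ × ℝ, f (g q, q.2)) ≤ ENNReal.ofReal a0 * (∫⁻ q : ℝ × ℝ, f q) :=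
  stmt4_general a0 b0 ha0 g hg1 hg2
end

section
/- Let 0 < b0 < 1 and let h : ℝ → ℝ be Lipschitz with constant b0, and let θ ∈ [−π/4, π/4]. Let R_θ : ℝ² → ℝ² be the rotation R_θ(x,y) = (x cos θ − y sin θ, x sin θ + y cos θ). Then there exists a Lipschitz function g̃ : ℝ → ℝ with Lipschitz constant at most (1+b0)/(1−b0) such that R_θ({(h(y), y) : y ∈ ℝ}) = {(g̃(y'), y') : y' ∈ ℝ}. -/
/-!
Write `c = cos θ`, `s = sin θ`; for `|θ| ≤ π/4` we have `|s| ≤ c`. The rotation sends `(h y, y)` to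
`(ψ y, φ y)` with `φ y = h y * s + y * c` and `ψ y = h y * c - y * s`. Since `h` is `b0`-Lipschitz,
`φ` grows at rate at least `(1 - b0) c`, so it is a continuous bijection of `ℝ` whose inverse is
`((1 - b0) c)⁻¹`-Lipschitz, while `ψ` is `(1 + b0) c`-Lipschitz. The rotated graph is the graph of
`ψ ∘ φ⁻¹`, and the factors `c` cancel in the Lipschitz constant.
-/

open Real Filter

theorem abs_sin_le_cos_of_abs_le_pi_div_four {θ : ℝ} (hθ : |θ| ≤ π / 4) : |sin θ| ≤ cos θ := by
  have hπ := pi_pos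
  rw [abs_sin_eq_sin_abs_of_abs_le_pi (by linarith), ← cos_abs]
  calc sin |θ| ≤ sin (π / 4) :=
        sin_le_sin_of_le_of_le_pi_div_two (by linarith [abs_nonneg θ]) (by linarith) hθ
    _ = cos (π / 4) := by rw [sin_pi_div_four, cos_pi_div_four]
    _ ≤ cos |θ| := cos_le_cos_of_nonneg_of_le_pi (abs_nonneg θ) (by linarith) hθ

section MonotoneSubMul

variable {f : ℝ → ℝ} {m : ℝ}

theorem antilipschitzWith_of_monotone_sub_mul (hm : 0 < m) (hf : Monotone fun x => f x - m * x) :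
    AntilipschitzWith (toNNReal m⁻¹) f := by
  refine AntilipschitzWith.of_le_mul_dist fun x y => ?_
  wlog hxy : x ≤ y generalizing x y
  · rw [dist_comm, dist_comm (f x)]
    exact this y x (le_of_not_ge hxy)
  have hgrowth : m * (y - x) ≤ f y - f x := by linarith [hf hxy]
  rw [coe_toNNReal _ (inv_nonneg.2 hm.le), dist_comm, dist_eq, dist_comm, dist_eq,
    abs_of_nonneg (sub_nonneg.2 hxy), le_inv_mul_iff₀ hm]
  exact hgrowth.trans (le_abs_self _)

theorem surjective_of_monotone_sub_mul (hcont : Continuous f) (hm : 0 < m)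
    (hf : Monotone fun x => f x - m * x) : Function.Surjective f := by
  have hsplit : f = fun x => (f x - m * x) + m * x := by ext; ring
  refine hcont.surjective ?_ ?_ <;> rw [hsplit]
  · exact tendsto_atTop_add_left_of_le' _ _ ((eventually_ge_atTop 0).mono fun x hx => hf hx)
      (tendsto_id.const_mul_atTop hm)
  · exact tendsto_atBot_add_left_of_ge' _ _ ((eventually_le_atBot 0).mono fun x hx => hf hx)
      (tendsto_id.const_mul_atBot hm)

theorem exists_equiv_lipschitzWith_symm_of_monotone_sub_mul (hcont : Continuous f) (hm : 0 < m)
    (hf : Monotone fun x => f x - m * x) :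
    ∃ e : ℝ ≃ ℝ, ⇑e = f ∧ LipschitzWith (toNNReal m⁻¹) e.symm := by
  have hanti := antilipschitzWith_of_monotone_sub_mul hm hf
  let e := Equiv.ofBijective f ⟨hanti.injective, surjective_of_monotone_sub_mul hcont hm hf⟩
  exact ⟨e, rfl, hanti.to_rightInverse e.right_inv⟩

end MonotoneSubMul

section LipschitzCombination

variable {h : ℝ → ℝ} {K : NNReal} {a b : ℝ}

theorem LipschitzWith.monotone_mul_add_mul_sub_mul (hh : LipschitzWith K h) (hab : |b| ≤ a) :
    Monotone fun y => (h y * b + y * a) - (1 - K) * a * y := by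
  intro x y hxy
  have hdist : |h y - h x| ≤ K * (y - x) := by
    simpa [dist_eq, abs_of_nonneg (sub_nonneg.2 hxy)] using hh.dist_le_mul y x
  have hcross : |(h y - h x) * b| ≤ K * (y - x) * a := by
    rw [abs_mul]
    exact mul_le_mul hdist hab (abs_nonneg _) (by positivity)
  dsimp only
  linarith [neg_abs_le ((h y - h x) * b)]

theorem LipschitzWith.mul_sub_mul (hh : LipschitzWith K h) (hab : |b| ≤ a) :
    LipschitzWith (toNNReal ((1 + K) * a)) fun y => h y * a - y * b := by
  have ha : 0 ≤ a := (abs_nonneg b).trans hab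
  refine LipschitzWith.of_dist_le_mul fun x y => ?_
  have hdist : |h x - h y| ≤ K * |x - y| := by simpa [dist_eq] using hh.dist_le_mul x y
  rw [coe_toNNReal _ (by positivity), dist_eq, dist_eq]
  calc |h x * a - x * b - (h y * a - y * b)| = |(h x - h y) * a - (x - y) * b| := by ring_nf
    _ ≤ |h x - h y| * a + |x - y| * |b| := by
      simpa [abs_mul, abs_of_nonneg ha] using abs_sub ((h x - h y) * a) ((x - y) * b)
    _ ≤ K * |x - y| * a + |x - y| * a := by gcongr
    _ = (1 + K) * a * |x - y| := by ring

end LipschitzCombination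

theorem image_graph_eq_graph_comp_symm {α β γ δ : Type*} (R : α × β → γ × δ) (h : β → α)
    (ψ : β → γ) (e : β ≃ δ) (hR : ∀ y, R (h y, y) = (ψ y, e y)) :
    R '' {p | ∃ y, p = (h y, y)} = {p | ∃ y', p = (ψ (e.symm y'), y')} := by
  ext p
  constructor
  · rintro ⟨_, ⟨y, rfl⟩, rfl⟩
    exact ⟨e y, by rw [hR, e.symm_apply_apply]⟩
  · rintro ⟨y', rfl⟩
    exact ⟨_, ⟨e.symm y', rfl⟩, by rw [hR, e.apply_symm_apply]⟩

/-- Lemma 3.2: a near-vertical Lipschitz graph, after rotation of the coordinate system by an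
angle of absolute value at most `π/4`, is again a Lipschitz graph over the new vertical axis,
with Lipschitz constant at most `(1+b0)/(1-b0)`. -/
theorem stmt5 (b0 : ℝ) (hb0 : 0 < b0) (hb0' : b0 < 1) (h : ℝ → ℝ)
    (hLip : LipschitzWith (Real.toNNReal b0) h) (θ : ℝ) (hθ : |θ| ≤ Real.pi / 4) :
    ∃ gt : ℝ → ℝ, LipschitzWith (Real.toNNReal ((1 + b0) / (1 - b0))) gt ∧
      (fun p : ℝ × ℝ =>
          (p.1 * Real.cos θ - p.2 * Real.sin θ, p.1 * Real.sin θ + p.2 * Real.cos θ)) ''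
        {p : ℝ × ℝ | ∃ y : ℝ, p = (h y, y)} =
      {p : ℝ × ℝ | ∃ y' : ℝ, p = (gt y', y')} := by
  have hb0_coe : (toNNReal b0 : ℝ) = b0 := coe_toNNReal _ hb0.le
  have hsc := abs_sin_le_cos_of_abs_le_pi_div_four hθ
  have hc : 0 < cos θ :=
    cos_pos_of_mem_Ioo (abs_lt.1 (hθ.trans_lt (by linarith [pi_pos])))
  obtain ⟨e, he, he_symm⟩ := exists_equiv_lipschitzWith_symm_of_monotone_sub_mul
    (by have := hLip.continuous; fun_prop) (by rw [hb0_coe]; exact mul_pos (by linarith) hc)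
    (hLip.monotone_mul_add_mul_sub_mul hsc)
  set ψ : ℝ → ℝ := fun y => h y * cos θ - y * sin θ
  refine ⟨ψ ∘ e.symm, ?_, ?_⟩
  · convert (hLip.mul_sub_mul hsc).comp he_symm using 1
    rw [hb0_coe, ← toNNReal_mul (mul_pos (by linarith) hc).le]
    congr 1
    field_simp
  · exact image_graph_eq_graph_comp_symm _ h ψ e fun y => by rw [he]
end

section
/- Let φ : ℝ² → ℂ and γ : ℝ → ℂ be Schwartz functions, and let u ∈ ℝ. Suppose that supp(𝓕γ) ∩ { ξ + uη : (ξ,η) ∈ supp(𝓕φ) } = ∅. Then for every (x,y) ∈ ℝ², ∫_ℝ γ(t) · φ(x − t, y − u t) dt = 0. -/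
/-!
Fourier inversion writes `φ(a, b) = ∫ Fφ(q) e(a q₁ + b q₂) dq`. Substituting `(a, b) = (x - t, y - u t)`
and integrating against `γ(t)` first (Fubini), the directional convolution becomes
`∫ Fφ(q) Fγ(q₁ + u q₂) e(x q₁ + y q₂) dq`, and the support hypothesis makes this integrand vanish
identically.
-/

open MeasureTheory FourierTransform Complex WithLp

/- `ℝ × ℝ` carries the sup norm, so Mathlib's `𝓕` and its inversion theorem do not apply to it;
these coordinate Fourier integrals are transported to the Euclidean plane `WithLp 2 (ℝ × ℝ)`. -/
noncomputable def fourierProd (f : ℝ × ℝ → ℂ) (w : ℝ × ℝ) : ℂ :=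
  ∫ p : ℝ × ℝ, f p * Complex.exp
    (-(2 * (Real.pi : ℂ) * Complex.I * ((p.1 : ℂ) * (w.1 : ℂ) + (p.2 : ℂ) * (w.2 : ℂ))))

noncomputable def fourierInvProd (g : ℝ × ℝ → ℂ) (p : ℝ × ℝ) : ℂ :=
  ∫ q : ℝ × ℝ, g q * Complex.exp
    (2 * (Real.pi : ℂ) * Complex.I * ((p.1 : ℂ) * (q.1 : ℂ) + (p.2 : ℂ) * (q.2 : ℂ)))

lemma integral_comp_ofLp_prod {E : Type*} [NormedAddCommGroup E] [NormedSpace ℝ E]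
    (f : ℝ × ℝ → E) :
    ∫ v : WithLp 2 (ℝ × ℝ), f (ofLp v) = ∫ p : ℝ × ℝ, f p :=
  (volume_preserving_symm_measurableEquiv_toLp_prod ℝ ℝ).integral_comp' f

lemma fourierProd_eq_fourier_comp_ofLp (f : ℝ × ℝ → ℂ) (w : ℝ × ℝ) :
    fourierProd f w = 𝓕 (fun v : WithLp 2 (ℝ × ℝ) => f (ofLp v)) (toLp 2 w) := by
  rw [Real.fourier_eq', fourierProd, ← integral_comp_ofLp_prod]
  congr 1 with v
  simp only [prod_inner_apply, RCLike.inner_apply, conj_trivial, smul_eq_mul]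
  rw [mul_comm]
  push_cast
  ring_nf

lemma fourierInvProd_eq_fourierInv_comp_ofLp (g : ℝ × ℝ → ℂ) (p : ℝ × ℝ) :
    fourierInvProd g p = 𝓕⁻ (fun v : WithLp 2 (ℝ × ℝ) => g (ofLp v)) (toLp 2 p) := by
  rw [Real.fourierInv_eq', fourierInvProd, ← integral_comp_ofLp_prod]
  congr 1 with v
  simp only [prod_inner_apply, RCLike.inner_apply, conj_trivial, smul_eq_mul]
  rw [mul_comm]
  push_cast
  ring_nf

namespace SchwartzMap

noncomputable def toEuclideanPlane (φ : 𝓢(ℝ × ℝ, ℂ)) : 𝓢(WithLp 2 (ℝ × ℝ), ℂ) :=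
  compCLMOfContinuousLinearEquiv ℂ (prodContinuousLinearEquiv 2 ℝ ℝ ℝ) φ

lemma fourierProd_eq_coe (φ : 𝓢(ℝ × ℝ, ℂ)) :
    fourierProd φ = ⇑(compCLMOfContinuousLinearEquiv ℂ (prodContinuousLinearEquiv 2 ℝ ℝ ℝ).symm
      (𝓕 φ.toEuclideanPlane)) := by
  ext w
  rw [fourierProd_eq_fourier_comp_ofLp]
  change _ = (𝓕 φ.toEuclideanPlane) (WithLp.toLp 2 w)
  rw [fourier_coe]
  rfl

lemma integrable_fourierProd (φ : 𝓢(ℝ × ℝ, ℂ)) : Integrable (fourierProd φ) := by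
  rw [fourierProd_eq_coe]
  exact SchwartzMap.integrable _

lemma fourierInvProd_fourierProd (φ : 𝓢(ℝ × ℝ, ℂ)) (p : ℝ × ℝ) :
    fourierInvProd (fourierProd φ) p = φ p := by
  rw [fourierInvProd_eq_fourierInv_comp_ofLp, fourierProd_eq_coe]
  have hinv := congrArg DFunLike.coe
    (fourierInv_fourier_eq (F := 𝓢(WithLp 2 (ℝ × ℝ), ℂ)) φ.toEuclideanPlane)
  rw [fourierInv_coe, fourier_coe] at hinv
  exact congrFun hinv (WithLp.toLp 2 p)

end SchwartzMap

lemma exp_two_pi_I_pairing_sub_line (x y t u : ℝ) (q : ℝ × ℝ) :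
    Complex.exp (2 * (Real.pi : ℂ) * Complex.I *
        (((x - t : ℝ) : ℂ) * (q.1 : ℂ) + ((y - u * t : ℝ) : ℂ) * (q.2 : ℂ))) =
      Complex.exp (2 * (Real.pi : ℂ) * Complex.I * ((x : ℂ) * (q.1 : ℂ) + (y : ℂ) * (q.2 : ℂ))) *
        Complex.exp (-(2 * (Real.pi : ℂ) * Complex.I * (t : ℂ) * ((q.1 + u * q.2 : ℝ) : ℂ))) := by
  rw [← Complex.exp_add]
  push_cast
  ring_nf

lemma integral_mul_fourierInvProd_line {γ : ℝ → ℂ} (hγ : Integrable γ) {F : ℝ × ℝ → ℂ}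
    (hF : Integrable F) (x y u : ℝ) :
    ∫ t : ℝ, γ t * fourierInvProd F (x - t, y - u * t) =
      ∫ q : ℝ × ℝ, F q * Complex.exp
          (2 * (Real.pi : ℂ) * Complex.I * ((x : ℂ) * (q.1 : ℂ) + (y : ℂ) * (q.2 : ℂ))) *
        ∫ t : ℝ, γ t * Complex.exp
          (-(2 * (Real.pi : ℂ) * Complex.I * (t : ℂ) * ((q.1 + u * q.2 : ℝ) : ℂ))) := by
  set f : ℝ → ℝ × ℝ → ℂ := fun t q => γ t * (F q * Complex.exp (2 * (Real.pi : ℂ) * Complex.I *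
    (((x - t : ℝ) : ℂ) * (q.1 : ℂ) + ((y - u * t : ℝ) : ℂ) * (q.2 : ℂ))))
  have hint : Integrable (Function.uncurry f) (volume.prod volume) := by
    refine (hγ.norm.mul_prod hF.norm).mono' ?_ (Filter.Eventually.of_forall fun ⟨t, q⟩ => ?_)
    · exact hγ.1.comp_fst.mul (hF.1.comp_snd.mul (by fun_prop : Continuous _).aestronglyMeasurable)
    · simp [f, norm_exp]
  calc ∫ t : ℝ, γ t * fourierInvProd F (x - t, y - u * t)
      = ∫ t : ℝ, ∫ q : ℝ × ℝ, f t q := by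
        simp only [fourierInvProd, ← integral_const_mul, f]
    _ = ∫ q : ℝ × ℝ, ∫ t : ℝ, f t q := integral_integral_swap hint
    _ = _ := by
        congr 1 with q
        simp only [f, exp_two_pi_I_pairing_sub_line, ← integral_const_mul]
        congr 1 with t
        ring

lemma mul_apply_eq_zero_of_disjoint_support {α β R : Type*} [MulZeroClass R] {f : α → R}
    {g : β → R} {h : α → β} (hd : Disjoint (Function.support g) (h '' Function.support f))
    (a : α) : f a * g (h a) = 0 := by
  by_contra hne
  exact hd.ne_of_mem (right_ne_zero_of_mul hne) (Set.mem_image_of_mem h (left_ne_zero_of_mul hne))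
    rfl

/-- Lemma 5.2: if the frequency support of the one-dimensional kernel `γ` is disjoint from the
projection `{ξ + uη}` of the frequency support of `φ` along the direction `(1,u)`, then the
directional convolution vanishes identically. -/
theorem stmt11 (φ : SchwartzMap (ℝ × ℝ) ℂ) (γ : SchwartzMap ℝ ℂ) (u : ℝ)
    (Fγ : ℝ → ℂ)
    (hFγ : ∀ ξ : ℝ, Fγ ξ =
      ∫ t : ℝ, γ t * Complex.exp (-(2 * (Real.pi : ℂ) * Complex.I * (t : ℂ) * (ξ : ℂ))))
    (Fφ : ℝ × ℝ → ℂ)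
    (hFφ : ∀ w : ℝ × ℝ, Fφ w =
      ∫ p : ℝ × ℝ, φ p * Complex.exp
        (-(2 * (Real.pi : ℂ) * Complex.I * ((p.1 : ℂ) * (w.1 : ℂ) + (p.2 : ℂ) * (w.2 : ℂ)))))
    (hdisj : tsupport Fγ ∩ {s : ℝ | ∃ q ∈ tsupport Fφ, s = q.1 + u * q.2} = ∅) :
    ∀ x y : ℝ, ∫ t : ℝ, γ t * φ (x - t, y - u * t) = 0 := by
  intro x y
  obtain rfl : Fφ = fourierProd φ := funext hFφ
  have hvanish (q : ℝ × ℝ) : fourierProd φ q * Fγ (q.1 + u * q.2) = 0 := by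
    refine mul_apply_eq_zero_of_disjoint_support (h := fun q : ℝ × ℝ => q.1 + u * q.2) ?_ q
    refine (Set.disjoint_iff_inter_eq_empty.mpr hdisj).mono (subset_tsupport _) ?_
    rintro _ ⟨q, hq, rfl⟩
    exact ⟨q, subset_tsupport _ hq, rfl⟩
  calc ∫ t : ℝ, γ t * φ (x - t, y - u * t)
      = ∫ t : ℝ, γ t * fourierInvProd (fourierProd φ) (x - t, y - u * t) := by
        simp_rw [φ.fourierInvProd_fourierProd]
    _ = 0 := by
        simp_rw [integral_mul_fourierInvProd_line γ.integrable φ.integrable_fourierProd, ← hFγ,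
          mul_right_comm _ _ (Fγ _), hvanish, zero_mul, integral_zero]
end

section
/- Let u ∈ ℝ with |u| < 1 and let f : ℝ² → ℂ be a Schwartz function whose Fourier transform is supported in the cone {(ξ,η) : |η| ≤ |ξ|}. Then for every (x,y) ∈ ℝ², the limits lim_{ε→0⁺} ∫_{ε≤|t|≤1/ε} f(x − t, y − u t) dt/t and lim_{ε→0⁺} ∫_{ε≤|t|≤1/ε} f(x − t, y) dt/t both exist and are equal; that is, the principal-value Hilbert transform of f along the direction (1,u) coincides with its Hilbert transform along the direction (1,0). -/
/-!
Write `f` as the inverse Fourier transform of its integrable Fourier transform `𝓕f`, and put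
`v = (1, u)` and `Si x = ∫₀ˣ sin t / t dt`. Over `ε ≤ |t| ≤ 1/ε` only the even part of
`e^{-2πiat}/t` survives, and it integrates to `-2i (Si(2πa/ε) - Si(2πaε))`; so by Fubini the
truncated Hilbert transform along `v` at `p` is
`∫ 𝓕f(w) e^{2πi⟨p, w⟩} (-2i) (Si(2π⟨v, w⟩/ε) - Si(2π⟨v, w⟩ε)) dw`. Since `Si` is odd, bounded and
has a limit `S` at `+∞`, dominated convergence gives the limit
`∫ 𝓕f(w) e^{2πi⟨p, w⟩} (-2i S) sign⟨v, w⟩ dw` (the value `S = π/2` is never needed). On the cone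
`|η| ≤ |ξ|` the sign of `ξ + uη` is that of `ξ`, so the limit is the same for `u` and for `0`.
-/

open MeasureTheory Filter Topology Set intervalIntegral
open scoped FourierTransform

section SineIntegral

open Real

noncomputable def sineIntegral (x : ℝ) : ℝ := ∫ t in 0..x, sinc t

@[fun_prop]
lemma continuous_sineIntegral : Continuous sineIntegral :=
  continuous_primitive (fun _ _ => continuous_sinc.intervalIntegrable _ _) 0

@[simp] lemma sineIntegral_zero : sineIntegral 0 = 0 := integral_same

lemma sineIntegral_neg (x : ℝ) : sineIntegral (-x) = -sineIntegral x := by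
  have h := integral_comp_neg (a := 0) (b := x) sinc
  simp only [sinc_neg, neg_zero] at h
  rw [sineIntegral, sineIntegral, h, integral_symm]

lemma integral_sin_mul_div_eq_sineIntegral (c a b : ℝ) :
    ∫ t in a..b, sin (c * t) / t = sineIntegral (c * b) - sineIntegral (c * a) := by
  rcases eq_or_ne c 0 with rfl | hc
  · simp
  have hsinc : ∀ᵐ t, t ∈ uIoc a b → sin (c * t) / t = c * sinc (c * t) := by
    filter_upwards [volume.ae_ne 0] with t ht _
    rw [sinc_of_ne_zero (mul_ne_zero hc ht)]
    field_simp
  rw [integral_congr_ae hsinc]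
  simp_rw [intervalIntegral.integral_const_mul, integral_comp_mul_left sinc hc, smul_eq_mul,
    mul_inv_cancel_left₀ hc]
  rw [sineIntegral, sineIntegral, integral_interval_sub_left] <;>
    exact continuous_sinc.intervalIntegrable _ _

lemma hasDerivAt_neg_cos_div {t : ℝ} (ht : t ≠ 0) :
    HasDerivAt (fun s => -cos s / s) (sinc t + cos t / t ^ 2) t := by
  refine (((hasDerivAt_cos t).neg).div (hasDerivAt_id t) ht).congr_deriv ?_
  rw [sinc_of_ne_zero ht]
  simp only [id, Pi.neg_apply, neg_neg, mul_one]
  field_simp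
  ring

lemma integral_sinc_eq_of_one_le {b : ℝ} (hb : 1 ≤ b) :
    ∫ t in 1..b, sinc t = cos 1 - cos b / b - ∫ t in 1..b, cos t / t ^ 2 := by
  have hpos : ∀ t ∈ uIcc 1 b, t ≠ 0 := fun t ht => by
    rw [uIcc_of_le hb] at ht; linarith [ht.1]
  have hcos : IntervalIntegrable (fun t => cos t / t ^ 2) volume 1 b :=
    (continuousOn_cos.div (continuousOn_pow 2) fun t ht => pow_ne_zero 2 (hpos t ht))
      |>.intervalIntegrable
  have h := integral_eq_sub_of_hasDerivAt (fun t ht => hasDerivAt_neg_cos_div (hpos t ht))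
    ((continuous_sinc.intervalIntegrable 1 b).add hcos)
  rw [integral_add (continuous_sinc.intervalIntegrable 1 b) hcos] at h
  rw [div_one, neg_div] at h
  linarith

lemma integrableOn_cos_div_sq : IntegrableOn (fun t => cos t / t ^ 2) (Ioi 1) := by
  refine (integrableOn_Ioi_rpow_of_lt (by norm_num : (-2 : ℝ) < -1) one_pos).mono' ?_ ?_
  · exact (continuous_cos.measurable.div (continuous_pow 2).measurable).aestronglyMeasurable
  · filter_upwards [ae_restrict_mem measurableSet_Ioi] with t (ht : 1 < t)
    rw [norm_div, norm_pow, Real.norm_of_nonneg (by linarith : (0:ℝ) ≤ t), rpow_neg (by linarith),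
      rpow_two, div_eq_mul_inv]
    exact mul_le_of_le_one_left (by positivity) (abs_cos_le_one t)

lemma tendsto_cos_div_atTop : Tendsto (fun b => cos b / b) atTop (𝓝 0) := by
  simp_rw [div_eq_mul_inv]
  exact isBoundedUnder_le_mul_tendsto_zero
    (isBoundedUnder_of ⟨1, fun b => by simpa using abs_cos_le_one b⟩) tendsto_inv_atTop_zero

lemma exists_tendsto_sineIntegral_atTop : ∃ S, Tendsto sineIntegral atTop (𝓝 S) := by
  have h := (tendsto_const_nhds (x := sineIntegral 1 + cos 1)).sub (tendsto_cos_div_atTop.add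
    (intervalIntegral_tendsto_integral_Ioi 1 integrableOn_cos_div_sq tendsto_id))
  refine ⟨_, h.congr' ?_⟩
  filter_upwards [eventually_ge_atTop 1] with b hb
  have hsplit := integral_add_adjacent_intervals (a := 0) (b := 1) (c := b)
    (continuous_sinc.intervalIntegrable (μ := volume) _ _) (continuous_sinc.intervalIntegrable _ _)
  rw [id, sineIntegral, sineIntegral, ← hsplit, integral_sinc_eq_of_one_le hb]
  ring

lemma tendsto_sineIntegral_atBot {S : ℝ} (hS : Tendsto sineIntegral atTop (𝓝 S)) :
    Tendsto sineIntegral atBot (𝓝 (-S)) :=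
  ((hS.comp tendsto_neg_atBot_atTop).neg).congr fun x => by simp [sineIntegral_neg]

lemma exists_abs_sineIntegral_le : ∃ C, ∀ x, |sineIntegral x| ≤ C := by
  obtain ⟨S, hS⟩ := exists_tendsto_sineIntegral_atTop
  have h : Tendsto (fun x => |sineIntegral x|) (cocompact ℝ) (𝓝 |S|) := by
    rw [cocompact_eq_atBot_atTop]
    exact tendsto_sup.2 ⟨by simpa using (tendsto_sineIntegral_atBot hS).abs, hS.abs⟩
  obtain ⟨C, hC⟩ := (h.isCompact_insert_range_of_cocompact continuous_sineIntegral.abs).bddAbove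
  exact ⟨C, fun x => hC (mem_insert_of_mem _ ⟨x, rfl⟩)⟩

lemma tendsto_sineIntegral_mul_one_div_sub {S : ℝ} (hS : Tendsto sineIntegral atTop (𝓝 S))
    (a : ℝ) :
    Tendsto (fun ε => sineIntegral (a * (1 / ε)) - sineIntegral (a * ε)) (𝓝[>] 0)
      (𝓝 ((SignType.sign a : ℝ) * S)) := by
  have h₀ : Tendsto (fun ε => sineIntegral (a * ε)) (𝓝[>] 0) (𝓝 0) := by
    simpa [Function.comp_def] using
      ((continuous_sineIntegral.comp (continuous_const_mul a)).tendsto 0).mono_left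
        nhdsWithin_le_nhds
  suffices Tendsto (fun ε => sineIntegral (a * (1 / ε))) (𝓝[>] 0)
      (𝓝 ((SignType.sign a : ℝ) * S)) by
    simpa using this.sub h₀
  simp_rw [one_div]
  rcases lt_trichotomy a 0 with ha | rfl | ha
  · simpa [sign_neg ha, Function.comp_def] using
      (tendsto_sineIntegral_atBot hS).comp (tendsto_inv_nhdsGT_zero.const_mul_atTop_of_neg ha)
  · simp
  · simpa [sign_pos ha, Function.comp_def] using
      hS.comp (tendsto_inv_nhdsGT_zero.const_mul_atTop ha)

end SineIntegral

lemma abs_preimage_Icc {a b : ℝ} (ha : 0 < a) : abs ⁻¹' Icc a b = Icc (-b) (-a) ∪ Icc a b := by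
  ext t
  simp only [mem_preimage, mem_Icc, mem_union]
  rcases abs_cases t with ⟨h, _⟩ | ⟨h, _⟩ <;> rw [h] <;> constructor <;> intro h' <;> grind

lemma setIntegral_abs_preimage_Icc {E : Type*} [NormedAddCommGroup E] [NormedSpace ℝ E]
    {G : ℝ → E} {a b : ℝ} (ha : 0 < a) (hab : a ≤ b)
    (hG : IntegrableOn G (abs ⁻¹' Icc a b)) :
    ∫ t in abs ⁻¹' Icc a b, G t = ∫ t in a..b, (G t + G (-t)) := by
  rw [abs_preimage_Icc ha] at hG ⊢
  have hdisj : Disjoint (Icc (-b) (-a)) (Icc a b) :=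
    disjoint_left.2 fun t h₁ h₂ => by linarith [h₁.2, h₂.1]
  have hneg : IntervalIntegrable (fun t => G (-t)) volume a b := by
    have h : IntervalIntegrable G volume (-b) (-a) :=
      (intervalIntegrable_iff_integrableOn_Icc_of_le (by linarith)).2
        (hG.mono_set subset_union_left)
    simpa using ((IntervalIntegrable.iff_comp_neg (by finiteness)).1 h).symm
  rw [setIntegral_union hdisj measurableSet_Icc (hG.mono_set subset_union_left)
    (hG.mono_set subset_union_right), integral_Icc_eq_integral_Ioc, integral_Icc_eq_integral_Ioc,
    ← integral_of_le (by linarith), ← integral_of_le hab, ← integral_comp_neg, add_comm,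
    integral_add ((intervalIntegrable_iff_integrableOn_Icc_of_le hab).2
      (hG.mono_set subset_union_right)) hneg]

open Complex in
lemma exp_neg_mul_I_sub_exp_mul_I (θ : ℝ) :
    exp (↑(-θ) * I) - exp (↑θ * I) = -2 * I * ↑(Real.sin θ) := by
  rw [exp_mul_I, exp_mul_I, ofReal_neg, Complex.cos_neg, Complex.sin_neg, ofReal_sin]
  ring

lemma isCompact_abs_preimage_Icc (a b : ℝ) : IsCompact (abs ⁻¹' Icc a b) :=
  (isCompact_Icc (a := -b) (b := b)).of_isClosed_subset
    (isClosed_Icc.preimage continuous_abs) fun _ ht => abs_le.1 ht.2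

open Complex in
lemma integral_abs_preimage_Icc_exp_div (a : ℝ) {r R : ℝ} (hr : 0 < r) (hrR : r ≤ R) :
    ∫ t in abs ⁻¹' Icc r R, exp (↑(-(a * t)) * I) / t
      = -2 * I * ↑(sineIntegral (a * R) - sineIntegral (a * r)) := by
  have hne : ∀ t ∈ abs ⁻¹' Icc r R, (t : ℂ) ≠ 0 := fun t ht =>
    ofReal_ne_zero.2 (abs_pos.1 (hr.trans_le ht.1))
  have hint : IntegrableOn (fun t : ℝ => exp (↑(-(a * t)) * I) / t) (abs ⁻¹' Icc r R) :=
    ContinuousOn.integrableOn_compact (isCompact_abs_preimage_Icc r R)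
      (ContinuousOn.div (by fun_prop) (by fun_prop) hne)
  rw [setIntegral_abs_preimage_Icc hr hrR hint, ← integral_sin_mul_div_eq_sineIntegral,
    ← integral_ofReal, ← intervalIntegral.integral_const_mul]
  refine integral_congr fun t _ => ?_
  rw [ofReal_div, ← mul_div_assoc, ← exp_neg_mul_I_sub_exp_mul_I, mul_neg, neg_neg,
    ofReal_neg t, div_neg, sub_div]
  ring

section PrincipalValue

variable {W : Type*} [MeasurableSpace W] {μ : Measure W} {F : W → ℂ} {ψ : W → ℝ}

open Complex

lemma integral_abs_preimage_Icc_fourier_div [SFinite μ] (hF : Integrable F μ)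
    (hψ : Measurable ψ) {r R : ℝ} (hr : 0 < r) (hrR : r ≤ R) :
    ∫ t in abs ⁻¹' Icc r R, (∫ w, F w * exp (↑(-(ψ w * t)) * I) ∂μ) / t
      = ∫ w, F w * (-2 * I * ↑(sineIntegral (ψ w * R) - sineIntegral (ψ w * r))) ∂μ := by
  set A := abs ⁻¹' Icc r R
  have hA := isCompact_abs_preimage_Icc r R
  have : IsFiniteMeasure (volume.restrict A) := isFiniteMeasure_restrict.2 hA.measure_lt_top.ne
  have hinv : Integrable (fun t : ℝ => (t : ℂ)⁻¹) (volume.restrict A) :=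
    ContinuousOn.integrableOn_compact hA (ContinuousOn.inv₀ (by fun_prop) fun t ht =>
      ofReal_ne_zero.2 (abs_pos.1 (hr.trans_le ht.1)))
  have hint : Integrable (fun p : ℝ × W => F p.2 * (exp (↑(-(ψ p.2 * p.1)) * I) / p.1))
      ((volume.restrict A).prod μ) := by
    refine ((hinv.mul_prod hF).bdd_mul (c := 1)
      (f := fun p : ℝ × W => exp (↑(-(ψ p.2 * p.1)) * I)) (by fun_prop)
      (ae_of_all _ fun p => ?_)).congr (ae_of_all _ fun p => ?_)
    · rw [norm_exp_ofReal_mul_I]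
    · simp only
      ring
  calc ∫ t in A, (∫ w, F w * exp (↑(-(ψ w * t)) * I) ∂μ) / t
      = ∫ t in A, (∫ w, F w * (exp (↑(-(ψ w * t)) * I) / t) ∂μ) := by
        congr with t
        rw [← MeasureTheory.integral_div]
        simp only [mul_div_assoc]
    _ = ∫ w, (∫ t in A, F w * (exp (↑(-(ψ w * t)) * I) / t)) ∂μ := integral_integral_swap hint
    _ = _ := by
        congr with w
        rw [MeasureTheory.integral_const_mul, integral_abs_preimage_Icc_exp_div _ hr hrR]

lemma tendsto_integral_mul_sineIntegral (hF : Integrable F μ) (hψ : AEMeasurable ψ μ) {S : ℝ}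
    (hS : Tendsto sineIntegral atTop (𝓝 S)) :
    Tendsto (fun ε => ∫ w, F w *
        (-2 * I * ↑(sineIntegral (ψ w * (1 / ε)) - sineIntegral (ψ w * ε))) ∂μ)
      (𝓝[>] 0) (𝓝 (∫ w, F w * (-2 * I * ↑((SignType.sign (ψ w) : ℝ) * S)) ∂μ)) := by
  obtain ⟨C, hC⟩ := exists_abs_sineIntegral_le
  refine tendsto_integral_filter_of_dominated_convergence (fun w => ‖F w‖ * (2 * (C + C)))
    (Eventually.of_forall fun ε => ?_) (Eventually.of_forall fun ε => ae_of_all _ fun w => ?_)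
    (hF.norm.mul_const _) (ae_of_all _ fun w => ?_)
  · have hc : Continuous fun a : ℝ =>
        -2 * I * ↑(sineIntegral (a * (1 / ε)) - sineIntegral (a * ε)) := by fun_prop
    exact hF.aestronglyMeasurable.mul (hc.comp_aestronglyMeasurable hψ.aestronglyMeasurable)
  · rw [norm_mul, norm_mul, norm_real, Real.norm_eq_abs]
    gcongr
    · simp
    · exact (abs_sub _ _).trans (add_le_add (hC _) (hC _))
  · exact ((continuous_ofReal.const_mul _).const_mul _).tendsto _ |>.comp
      (tendsto_sineIntegral_mul_one_div_sub hS (ψ w))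

theorem tendsto_setIntegral_div_of_eq_integral [SFinite μ] (hF : Integrable F μ)
    (hψ : Measurable ψ) {g : ℝ → ℂ} (hg : ∀ t, g t = ∫ w, F w * exp (↑(-(ψ w * t)) * I) ∂μ)
    {S : ℝ} (hS : Tendsto sineIntegral atTop (𝓝 S)) :
    Tendsto (fun ε : ℝ => ∫ t in {t : ℝ | ε ≤ |t| ∧ |t| ≤ 1 / ε}, g t / t) (𝓝[>] 0)
      (𝓝 (∫ w, F w * (-2 * I * ↑((SignType.sign (ψ w) : ℝ) * S)) ∂μ)) := by
  refine (tendsto_integral_mul_sineIntegral hF hψ.aemeasurable hS).congr' ?_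
  filter_upwards [Ioc_mem_nhdsGT one_pos] with ε ⟨hε, hε1⟩
  simp only [hg]
  exact (integral_abs_preimage_Icc_fourier_div hF hψ hε
    ((le_div_iff₀ hε).2 (by nlinarith))).symm

end PrincipalValue

lemma sign_add_mul_eq_sign {u ξ η : ℝ} (hu : |u| < 1) (h : |η| ≤ |ξ|) :
    SignType.sign (ξ + u * η) = SignType.sign ξ := by
  rcases eq_or_ne ξ 0 with rfl | hξ
  · simp [abs_nonpos_iff.1 (h.trans_eq abs_zero)]
  have hsmall : |u * η| < |ξ| := by
    rw [abs_mul]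
    calc |u| * |η| ≤ |u| * |ξ| := by gcongr
      _ < |ξ| := mul_lt_of_lt_one_left (abs_pos.2 hξ) hu
  rcases hξ.lt_or_gt with hneg | hpos
  · rw [abs_of_neg hneg] at hsmall
    rw [sign_neg hneg, sign_neg (by linarith [le_abs_self (u * η)])]
  · rw [abs_of_pos hpos] at hsmall
    rw [sign_pos hpos, sign_pos (by linarith [neg_abs_le (u * η)])]

open Complex in
theorem SchwartzMap.fourier_inversion_prod (f : SchwartzMap (ℝ × ℝ) ℂ) (Ff : ℝ × ℝ → ℂ)
    (hFf : ∀ w : ℝ × ℝ, Ff w =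
      ∫ p : ℝ × ℝ, f p *
        exp (-(2 * (Real.pi : ℂ) * I * ((p.1 : ℂ) * (w.1 : ℂ) + (p.2 : ℂ) * (w.2 : ℂ))))) :
    Integrable Ff ∧ ∀ p : ℝ × ℝ, f p =
      ∫ w, Ff w * exp (↑(2 * Real.pi * (p.1 * w.1 + p.2 * w.2)) * I) := by
  set g : SchwartzMap (WithLp 2 (ℝ × ℝ)) ℂ :=
    SchwartzMap.compCLMOfContinuousLinearEquiv ℝ (WithLp.prodContinuousLinearEquiv 2 ℝ ℝ ℝ) f
  have hmp := WithLp.volume_preserving_toLp ℝ ℝ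
  have hme := (MeasurableEquiv.toLp 2 (ℝ × ℝ)).measurableEmbedding
  have hFg : Ff = 𝓕 (g : WithLp 2 (ℝ × ℝ) → ℂ) ∘ WithLp.toLp 2 := by
    ext w
    rw [Function.comp_apply, Real.fourier_eq', hFf, ← hmp.integral_comp hme]
    congr 1 with p
    simp only [g, SchwartzMap.compCLMOfContinuousLinearEquiv_apply, Function.comp_apply,
      WithLp.prodContinuousLinearEquiv_apply, WithLp.prod_inner_apply, RCLike.inner_apply',
      conj_trivial, smul_eq_mul]
    rw [mul_comm]
    push_cast
    ring_nf
  refine ⟨?_, fun p => ?_⟩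
  · rw [hFg, hmp.integrable_comp_emb hme, ← SchwartzMap.fourier_coe]
    exact (𝓕 g).integrable
  have h := congrArg (· (WithLp.toLp 2 p))
    (FourierTransform.fourierInv_fourier_eq (F := SchwartzMap (WithLp 2 (ℝ × ℝ)) ℂ) g)
  simp only [SchwartzMap.fourierInv_coe, SchwartzMap.fourier_coe, Real.fourierInv_eq'] at h
  rw [← hmp.integral_comp hme] at h
  rw [hFg]
  refine h.symm.trans (integral_congr_ae (ae_of_all _ fun w => ?_))
  simp only [Function.comp_apply, WithLp.prod_inner_apply, RCLike.inner_apply', conj_trivial,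
    smul_eq_mul]
  rw [mul_comm]
  ring_nf

open Complex in
theorem tendsto_directionalHilbert_of_eq_integral {f Ff : ℝ × ℝ → ℂ} (hFf : Integrable Ff)
    (hf : ∀ p : ℝ × ℝ, f p = ∫ w, Ff w * exp (↑(2 * Real.pi * (p.1 * w.1 + p.2 * w.2)) * I))
    {S : ℝ} (hS : Tendsto sineIntegral atTop (𝓝 S)) (u x y : ℝ) :
    Tendsto (fun ε : ℝ =>
        ∫ t in {t : ℝ | ε ≤ |t| ∧ |t| ≤ 1 / ε}, f (x - t, y - u * t) / (t : ℂ)) (𝓝[>] 0)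
      (𝓝 (∫ w, Ff w * exp (↑(2 * Real.pi * (x * w.1 + y * w.2)) * I) *
        (-2 * I * ↑((SignType.sign (w.1 + u * w.2) : ℝ) * S)))) := by
  have hF : Integrable fun w : ℝ × ℝ => Ff w * exp (↑(2 * Real.pi * (x * w.1 + y * w.2)) * I) :=
    hFf.mul_bdd (by fun_prop) (ae_of_all _ fun w => (norm_exp_ofReal_mul_I _).le)
  have h := tendsto_setIntegral_div_of_eq_integral hF
    (ψ := fun w => 2 * Real.pi * (w.1 + u * w.2)) (by fun_prop)
    (g := fun t => f (x - t, y - u * t)) (fun t => by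
      rw [hf]
      congr with w
      rw [mul_assoc (Ff w), ← exp_add, ← add_mul, ← ofReal_add]
      ring_nf) hS
  simpa only [sign_mul, sign_pos (by positivity : 0 < 2 * Real.pi), one_mul] using h

/-- For a Schwartz function with frequency support in the cone `{|η| ≤ |ξ|}` around the
horizontal frequency axis, the principal-value Hilbert transform along any direction `(1,u)`
with `|u| < 1` exists pointwise and coincides with the Hilbert transform along `(1,0)`. -/
theorem stmt16 (u : ℝ) (hu : |u| < 1) (f : SchwartzMap (ℝ × ℝ) ℂ)
    (Ff : ℝ × ℝ → ℂ)
    (hFf : ∀ w : ℝ × ℝ, Ff w =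
      ∫ p : ℝ × ℝ, f p * Complex.exp
        (-(2 * (Real.pi : ℂ) * Complex.I * ((p.1 : ℂ) * (w.1 : ℂ) + (p.2 : ℂ) * (w.2 : ℂ)))))
    (hsupp : tsupport Ff ⊆ {w : ℝ × ℝ | |w.2| ≤ |w.1|}) :
    ∀ x y : ℝ, ∃ L : ℂ,
      Tendsto (fun ε : ℝ =>
          ∫ t in {t : ℝ | ε ≤ |t| ∧ |t| ≤ 1 / ε}, f (x - t, y - u * t) / (t : ℂ))
        (𝓝[>] (0 : ℝ)) (𝓝 L) ∧
      Tendsto (fun ε : ℝ =>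
          ∫ t in {t : ℝ | ε ≤ |t| ∧ |t| ≤ 1 / ε}, f (x - t, y) / (t : ℂ))
        (𝓝[>] (0 : ℝ)) (𝓝 L) := by
  intro x y
  obtain ⟨hFfint, hinv⟩ := SchwartzMap.fourier_inversion_prod f Ff hFf
  obtain ⟨S, hS⟩ := exists_tendsto_sineIntegral_atTop
  refine ⟨_, tendsto_directionalHilbert_of_eq_integral hFfint hinv hS u x y, ?_⟩
  have h₀ := tendsto_directionalHilbert_of_eq_integral hFfint hinv hS 0 x y
  simp only [zero_mul, sub_zero, add_zero] at h₀
  convert h₀ using 2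
  refine integral_congr_ae (ae_of_all _ fun w => ?_)
  by_cases hw : Ff w = 0
  · simp [hw]
  · dsimp only
    rw [sign_add_mul_eq_sign hu (hsupp (subset_tsupport _ hw))]
end

section
/- Let f = 1_{B} be the indicator of the closed unit ball B = {q ∈ ℝ² : |q| ≤ 1}. Then: (a) for every x ∈ ℝ² with |x| > 1, the integral ∫_ℝ 1_B( x − t·x/|x| ) dt/t is absolutely convergent and equals log( (|x|+1)/(|x|−1) ); (b) for every p ∈ (1, 2], ∫_{{x ∈ ℝ² : |x| ≥ 2}} ( log( (|x|+1)/(|x|−1) ) )^p dx = ∞. Consequently, for the radial unit vector field v(x) = x/|x| (which is constant along rays from the origin), the Hilbert transform H_v f(x) = ∫ f(x − t v(x)) dt/t of f does not belong to L^p(ℝ²) for any p ∈ (1,2]. -/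
/-! The transform is explicit: along the ray through `x` the unit ball is the segment
`t ∈ [|x| - 1, |x| + 1]`, so `H_v f(x) = ∫ dt/t` over that segment, which is
`log ((|x|+1)/(|x|-1)) ≥ 1/|x|`. In polar coordinates the `p`-th power of this has
integral `≥ 2π ∫_2^∞ r · r^(-p) dr`, which diverges for `p ≤ 2`. -/

open MeasureTheory

/-- The Euclidean norm on `ℝ × ℝ`. -/
noncomputable def enorm2 (v : ℝ × ℝ) : ℝ := Real.sqrt (v.1 ^ 2 + v.2 ^ 2)

open Set Real
open scoped ENNReal

/-- `f (x - t v(x)) / t` for `f` the indicator of the closed unit ball and `v(x) = x / |x|`. -/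
noncomputable def radialHilbertIntegrand (x : ℝ × ℝ) (t : ℝ) : ℝ :=
  (if enorm2 (x - t • ((enorm2 x)⁻¹ • x)) ≤ 1 then (1 : ℝ) else 0) / t

lemma continuous_enorm2 : Continuous enorm2 := by
  unfold enorm2; fun_prop

lemma enorm2_smul (c : ℝ) (v : ℝ × ℝ) : enorm2 (c • v) = |c| * enorm2 v := by
  simp only [enorm2, Prod.smul_fst, Prod.smul_snd, smul_eq_mul]
  rw [mul_pow, mul_pow, ← mul_add, sqrt_mul (sq_nonneg c), sqrt_sq_eq_abs]

lemma enorm2_polarCoord_symm {p : ℝ × ℝ} (hp : 0 ≤ p.1) : enorm2 (polarCoord.symm p) = p.1 := by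
  simp only [enorm2, polarCoord_symm_apply, mul_pow, ← mul_add, cos_sq_add_sin_sq, mul_one,
    sqrt_sq hp]

lemma enorm2_sub_smul_unit {x : ℝ × ℝ} (hx : 0 < enorm2 x) (t : ℝ) :
    enorm2 (x - t • ((enorm2 x)⁻¹ • x)) = |enorm2 x - t| := by
  have hx' : x - t • ((enorm2 x)⁻¹ • x) = ((enorm2 x - t) / enorm2 x) • x := by
    rw [smul_smul, sub_div, div_self hx.ne', sub_smul, one_smul, div_eq_mul_inv]
  rw [hx', enorm2_smul, abs_div, abs_of_pos hx, div_mul_cancel₀ _ hx.ne']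

lemma radialHilbertIntegrand_eq_indicator {x : ℝ × ℝ} (hx : 0 < enorm2 x) :
    radialHilbertIntegrand x = (Icc (enorm2 x - 1) (enorm2 x + 1)).indicator (·⁻¹) := by
  funext t
  have hseg : |enorm2 x - t| ≤ 1 ↔ t ∈ Icc (enorm2 x - 1) (enorm2 x + 1) := by
    rw [abs_sub_le_iff, mem_Icc]
    constructor <;> rintro ⟨h₁, h₂⟩ <;> constructor <;> linarith
  simp only [radialHilbertIntegrand, enorm2_sub_smul_unit hx, hseg, indicator_apply]
  split_ifs <;> simp

lemma integrable_radialHilbertIntegrand {x : ℝ × ℝ} (hx : 1 < enorm2 x) :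
    Integrable (radialHilbertIntegrand x) := by
  rw [radialHilbertIntegrand_eq_indicator (by linarith), integrable_indicator_iff measurableSet_Icc]
  exact (continuousOn_inv₀.mono fun t ht => ne_of_gt (by linarith [ht.1])).integrableOn_Icc

lemma integral_radialHilbertIntegrand {x : ℝ × ℝ} (hx : 1 < enorm2 x) :
    ∫ t, radialHilbertIntegrand x t = log ((enorm2 x + 1) / (enorm2 x - 1)) := by
  rw [radialHilbertIntegrand_eq_indicator (by linarith), integral_indicator measurableSet_Icc,
    integral_Icc_eq_integral_Ioc, ← intervalIntegral.integral_of_le (by linarith),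
    integral_inv_of_pos (by linarith) (by linarith)]

lemma inv_le_log_div {r : ℝ} (hr : 1 < r) : r⁻¹ ≤ log ((r + 1) / (r - 1)) := by
  have hlog := one_sub_inv_le_log_of_pos (x := (r + 1) / (r - 1)) (by apply div_pos <;> linarith)
  rw [inv_div] at hlog
  calc r⁻¹ ≤ 1 - (r - 1) / (r + 1) := by
        rw [one_sub_div (by linarith), inv_eq_one_div, div_le_div_iff₀ (by linarith) (by linarith)]
        linarith
    _ ≤ _ := hlog

lemma inv_le_mul_log_div_rpow {r p : ℝ} (hr : 1 < r) (hp0 : 0 ≤ p) (hp2 : p ≤ 2) :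
    r⁻¹ ≤ r * log ((r + 1) / (r - 1)) ^ p := by
  have hr0 : 0 < r := by linarith
  calc r⁻¹ = r * r⁻¹ ^ (2 : ℝ) := by rw [rpow_two]; field_simp
    _ ≤ r * r⁻¹ ^ p :=
        mul_le_mul_of_nonneg_left
          (rpow_le_rpow_of_exponent_ge (by positivity) (inv_le_one_of_one_le₀ hr.le) hp2) hr0.le
    _ ≤ r * log ((r + 1) / (r - 1)) ^ p :=
        mul_le_mul_of_nonneg_left (rpow_le_rpow (by positivity) (inv_le_log_div hr) hp0) hr0.le

lemma lintegral_Ici_ofReal_inv_eq_top {a : ℝ} (ha : 0 < a) :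
    ∫⁻ r in Ici a, ENNReal.ofReal r⁻¹ = ⊤ := by
  by_contra h
  have hnonneg : 0 ≤ᵐ[volume.restrict (Ici a)] fun r : ℝ => r⁻¹ :=
    (ae_restrict_iff' measurableSet_Ici).2
      (ae_of_all _ fun r hr => inv_nonneg.2 (ha.le.trans hr))
  exact not_integrableOn_Ici_inv
    ((lintegral_ofReal_ne_top_iff_integrable measurable_inv.aestronglyMeasurable hnonneg).1 h)

lemma lintegral_comp_enorm2 {g : ℝ → ℝ≥0∞} (hg : Measurable g) :
    ∫⁻ x, g (enorm2 x) = ENNReal.ofReal (2 * π) * ∫⁻ r in Ioi 0, ENNReal.ofReal r * g r := by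
  rw [← lintegral_comp_polarCoord_symm,
    setLIntegral_congr_fun polarCoord.open_target.measurableSet fun p hp => by
      rw [smul_eq_mul, enorm2_polarCoord_symm (le_of_lt hp.1), ← mul_one (_ * _)],
    polarCoord_target, Measure.volume_eq_prod, ← Measure.prod_restrict,
    lintegral_prod_mul (f := fun r => ENNReal.ofReal r * g r) (g := fun _ => 1) (by fun_prop)
      aemeasurable_const, setLIntegral_one, Real.volume_Ioo, mul_comm]
  ring_nf

lemma lintegral_log_div_rpow_eq_top {p : ℝ} (hp0 : 0 ≤ p) (hp2 : p ≤ 2) :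
    ∫⁻ x in {x : ℝ × ℝ | 2 ≤ enorm2 x},
      ENNReal.ofReal (log ((enorm2 x + 1) / (enorm2 x - 1)) ^ p) = ⊤ := by
  set g : ℝ → ℝ≥0∞ := (Ici 2).indicator fun r => ENNReal.ofReal (log ((r + 1) / (r - 1)) ^ p)
  have hg : Measurable g := (Measurable.ennreal_ofReal (by fun_prop)).indicator measurableSet_Ici
  rw [← lintegral_indicator (measurableSet_le measurable_const continuous_enorm2.measurable)]
  change ∫⁻ x, g (enorm2 x) = ⊤
  rw [lintegral_comp_enorm2 hg, ENNReal.mul_eq_top]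
  refine Or.inl ⟨by simp [pi_pos], eq_top_mono ?_ (lintegral_Ici_ofReal_inv_eq_top two_pos)⟩
  calc ∫⁻ r in Ici 2, ENNReal.ofReal r⁻¹
      ≤ ∫⁻ r in Ici 2, ENNReal.ofReal r * g r := by
        refine setLIntegral_mono' measurableSet_Ici fun r (hr : 2 ≤ r) => ?_
        rw [show g r = _ from indicator_of_mem (show r ∈ Ici 2 from hr) _,
          ← ENNReal.ofReal_mul (by linarith)]
        exact ENNReal.ofReal_le_ofReal (inv_le_mul_log_div_rpow (by linarith) hp0 hp2)
    _ ≤ ∫⁻ r in Ioi 0, ENNReal.ofReal r * g r := lintegral_mono_set (Ici_subset_Ioi.2 two_pos)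

lemma not_memLp_radialHilbert {p : ℝ} (hp0 : 0 < p) (hp2 : p ≤ 2) :
    ¬ MemLp (fun x => ∫ t, radialHilbertIntegrand x t) (ENNReal.ofReal p) volume := by
  intro hmem
  have hfinite := lintegral_rpow_enorm_lt_top_of_eLpNorm_lt_top (by simpa using hp0)
    ENNReal.ofReal_ne_top hmem.2
  rw [ENNReal.toReal_ofReal hp0.le] at hfinite
  refine hfinite.ne (eq_top_mono ?_ (lintegral_log_div_rpow_eq_top hp0.le hp2))
  refine (setLIntegral_mono' (measurableSet_le measurable_const continuous_enorm2.measurable)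
    fun x (hx : 2 ≤ enorm2 x) => ?_).trans (setLIntegral_le_lintegral _ _)
  have hlog : 0 ≤ log ((enorm2 x + 1) / (enorm2 x - 1)) :=
    (inv_nonneg.2 (by linarith)).trans (inv_le_log_div (by linarith))
  rw [integral_radialHilbertIntegrand (by linarith), Real.enorm_of_nonneg hlog,
    ENNReal.ofReal_rpow_of_nonneg hlog hp0.le]

/-- The counterexample from the proof of Corollary 1.2: for the radial unit vector field
`v(x) = x/|x|`, the Hilbert transform of the indicator of the unit ball equals
`log((|x|+1)/(|x|−1))` for `|x| > 1` and fails to lie in `L^p(ℝ²)` for every `p ∈ (1,2]`. -/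
theorem stmt18 :
    (∀ x : ℝ × ℝ, 1 < enorm2 x →
      Integrable (fun t : ℝ =>
        (if enorm2 (x - t • ((enorm2 x)⁻¹ • x)) ≤ 1 then (1 : ℝ) else 0) / t) volume ∧
      (∫ t : ℝ,
          (if enorm2 (x - t • ((enorm2 x)⁻¹ • x)) ≤ 1 then (1 : ℝ) else 0) / t) =
        Real.log ((enorm2 x + 1) / (enorm2 x - 1))) ∧
    (∀ p : ℝ, 1 < p → p ≤ 2 →
      (∫⁻ x : ℝ × ℝ in {x : ℝ × ℝ | 2 ≤ enorm2 x},
        ENNReal.ofReal (Real.log ((enorm2 x + 1) / (enorm2 x - 1)) ^ p)) = ⊤) ∧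
    (∀ p : ℝ, 1 < p → p ≤ 2 →
      ¬ MemLp (fun x : ℝ × ℝ =>
          ∫ t : ℝ, (if enorm2 (x - t • ((enorm2 x)⁻¹ • x)) ≤ 1 then (1 : ℝ) else 0) / t)
        (ENNReal.ofReal p) volume) :=
  ⟨fun _ hx => ⟨integrable_radialHilbertIntegrand hx, integral_radialHilbertIntegrand hx⟩,
    fun _ hp1 hp2 => lintegral_log_div_rpow_eq_top (by linarith) hp2,
    fun _ hp1 hp2 => not_memLp_radialHilbert (by linarith) hp2⟩
end
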